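/- Duality upper bound on mutual information: Let X and Y be standard Borel measurable spaces, let μ be a probability measure on X, let κ be a Markov kernel from X to Y, and let ν = μ.bind κ be the output (mixture) measure on Y. Then for every probability measure q on Y, ∫ KL(κ(x) ‖ ν) dμ(x) ≤ ∫ KL(κ(x) ‖ q) dμ(x), where both sides are interpreted in the extended nonnegative reals. (The left-hand side is the mutual information of the channel κ with input distribution μ.) -/

import Mathlib

/-!
Golden formula: `∫ KL(κ x ‖ q) dμ = ∫ KL(κ x ‖ ν) dμ + KL(ν ‖ q)`, and the last term is
nonnegative. Both averaged divergences are divergences between joint laws on `X × Y`, namely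
`KL(μ ⊗ κ ‖ μ ⊗ q)` and `KL(μ ⊗ κ ‖ μ ⊗ ν)`. Swapping coordinates turns `μ ⊗ κ` into
`ν ⊗ κ†`, with `κ†` the posterior kernel (available since `X` is standard Borel), and
`μ ⊗ q`, `μ ⊗ ν` into `q ⊗ μ`, `ν ⊗ μ`; the chain rule for the Kullback–Leibler divergence
then splits off `KL(ν ‖ q)`.
-/

open MeasureTheory ProbabilityTheory
open scoped ENNReal NNReal

open Classical in
/-- Kullback–Leibler divergence between two measures, valued in `[0, ∞]`:
`∫ log (dP/dQ) dP` when `P ≪ Q` and this log-likelihood ratio is integrable,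
and `∞` otherwise. -/
noncomputable def klDiv {α : Type*} [MeasurableSpace α] (P Q : Measure α) : ℝ≥0∞ :=
  if P ≪ Q ∧ Integrable (llr P Q) P then ENNReal.ofReal (∫ x, llr P Q x ∂P) else ⊤

/-- Mathlib's divergence carries the correction term `Q.real univ - P.real univ`, which
vanishes for measures of equal mass. -/
lemma klDiv_eq_informationTheory_klDiv {α : Type*} [MeasurableSpace α] {P Q : Measure α}
    (h : P Set.univ = Q Set.univ) : klDiv P Q = InformationTheory.klDiv P Q := by
  by_cases hPQ : P ≪ Q ∧ Integrable (llr P Q) P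
  · rw [klDiv, if_pos hPQ, InformationTheory.klDiv_of_ac_of_integrable hPQ.1 hPQ.2,
      measureReal_def, measureReal_def, h, add_sub_cancel_right]
  · rw [klDiv, if_neg hPQ, eq_comm, InformationTheory.klDiv_eq_top_iff]
    exact fun hac hint ↦ hPQ ⟨hac, hint⟩

namespace ProbabilityTheory

lemma rnDeriv_measure_compProd_right {α β : Type*} [MeasurableSpace α] [MeasurableSpace β]
    [MeasurableSpace.CountableOrCountablyGenerated α β] {μ : Measure α} {κ η : Kernel α β}
    [IsFiniteMeasure μ] [IsFiniteKernel κ] [IsFiniteKernel η] (h_ac : ∀ᵐ a ∂μ, κ a ≪ η a) :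
    (μ ⊗ₘ κ).rnDeriv (μ ⊗ₘ η) =ᵐ[μ ⊗ₘ η] fun p ↦ κ.rnDeriv η p.1 p.2 := by
  have h_withDensity : μ ⊗ₘ κ = (μ ⊗ₘ η).withDensity (fun p ↦ κ.rnDeriv η p.1 p.2) := by
    rw [← Measure.compProd_withDensity (Kernel.measurable_rnDeriv κ η)]
    refine Measure.compProd_congr ?_
    filter_upwards [h_ac] with a ha using (Kernel.withDensity_rnDeriv_eq ha).symm
  rw [h_withDensity]
  exact Measure.rnDeriv_withDensity _ (Kernel.measurable_rnDeriv κ η)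

end ProbabilityTheory

-- Inside this namespace `klDiv` is Mathlib's `InformationTheory.klDiv`.
namespace InformationTheory

variable {α β : Type*} [MeasurableSpace α] [MeasurableSpace β]

lemma klDiv_map_swap (P Q : Measure (α × β)) [IsFiniteMeasure P] [IsFiniteMeasure Q] :
    klDiv (P.map Prod.swap) (Q.map Prod.swap) = klDiv P Q := by
  refine le_antisymm (klDiv_map_le P Q measurable_swap) ?_
  calc klDiv P Q = klDiv ((P.map Prod.swap).map Prod.swap) ((Q.map Prod.swap).map Prod.swap) := by
        simp only [Measure.map_map measurable_swap measurable_swap, Prod.swap_swap_eq,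
          Measure.map_id]
    _ ≤ klDiv (P.map Prod.swap) (Q.map Prod.swap) := klDiv_map_le _ _ measurable_swap

section CountableOrCountablyGenerated

variable [MeasurableSpace.CountableOrCountablyGenerated α β]

lemma klDiv_compProd_eq_lintegral (μ : Measure α) [IsFiniteMeasure μ] (κ η : Kernel α β)
    [IsFiniteKernel κ] [IsFiniteKernel η] :
    klDiv (μ ⊗ₘ κ) (μ ⊗ₘ η) = ∫⁻ a, klDiv (κ a) (η a) ∂μ := by
  by_cases h_ac : ∀ᵐ a ∂μ, κ a ≪ η a
  · rw [klDiv_eq_lintegral_klFun_of_ac (Measure.absolutelyContinuous_compProd_right_iff.mpr h_ac),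
      lintegral_congr_ae
        (by filter_upwards [rnDeriv_measure_compProd_right h_ac] with p hp; rw [hp]),
      Measure.lintegral_compProd (by fun_prop)]
    refine lintegral_congr_ae ?_
    filter_upwards [h_ac] with a ha
    rw [klDiv_eq_lintegral_klFun_of_ac ha]
    refine lintegral_congr_ae ?_
    filter_upwards [Kernel.rnDeriv_eq_rnDeriv_measure (κ := κ) (η := η) (a := a)] with b hb
    rw [hb]
  · have h_meas : MeasurableSet {a | ¬ κ a ≪ η a} :=
      (Kernel.measurableSet_absolutelyContinuous κ η).compl
    have h_pos : μ {a | ¬ κ a ≪ η a} ≠ 0 := h_ac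
    rw [klDiv_of_not_ac (Measure.absolutelyContinuous_compProd_right_iff.not.mpr h_ac), eq_comm,
      eq_top_iff]
    calc ∞ = ∫⁻ a in {a | ¬ κ a ≪ η a}, ∞ ∂μ := by simp [ENNReal.top_mul h_pos]
      _ = ∫⁻ a in {a | ¬ κ a ≪ η a}, klDiv (κ a) (η a) ∂μ :=
        setLIntegral_congr_fun h_meas fun a ha ↦ (klDiv_of_not_ac ha).symm
      _ ≤ ∫⁻ a, klDiv (κ a) (η a) ∂μ := setLIntegral_le_lintegral _ _

theorem lintegral_klDiv_eq_lintegral_klDiv_comp_add [StandardBorelSpace α]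
    (μ : Measure α) [IsProbabilityMeasure μ] (κ : Kernel α β) [IsMarkovKernel κ]
    (q : Measure β) [IsFiniteMeasure q] :
    ∫⁻ a, klDiv (κ a) q ∂μ = ∫⁻ a, klDiv (κ a) (κ ∘ₘ μ) ∂μ + klDiv (κ ∘ₘ μ) q := by
  have : Nonempty α := nonempty_of_isProbabilityMeasure μ
  have map_swap_compProd_const (ν : Measure β) [IsFiniteMeasure ν] :
      (μ ⊗ₘ Kernel.const α ν).map Prod.swap = ν ⊗ₘ Kernel.const β μ := by
    simp only [Measure.compProd_const, Measure.prod_swap]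
  calc ∫⁻ a, klDiv (κ a) q ∂μ = klDiv (μ ⊗ₘ κ) (μ ⊗ₘ Kernel.const α q) := by
        rw [klDiv_compProd_eq_lintegral]
        simp
    _ = klDiv ((κ ∘ₘ μ) ⊗ₘ κ†μ) (q ⊗ₘ Kernel.const β μ) := by
        rw [compProd_posterior_eq_map_swap, ← map_swap_compProd_const, klDiv_map_swap]
    _ = klDiv (κ ∘ₘ μ) q + klDiv ((κ ∘ₘ μ) ⊗ₘ κ†μ) ((κ ∘ₘ μ) ⊗ₘ Kernel.const β μ) :=
        klDiv_compProd_eq_add _ _ _ _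
    _ = ∫⁻ a, klDiv (κ a) (κ ∘ₘ μ) ∂μ + klDiv (κ ∘ₘ μ) q := by
        rw [compProd_posterior_eq_map_swap, ← map_swap_compProd_const, klDiv_map_swap,
          klDiv_compProd_eq_lintegral, add_comm]
        simp

end CountableOrCountablyGenerated

end InformationTheory

/-- Duality upper bound on mutual information: for any probability measure `q` on the
output space, `∫ KL(κ(x) ‖ ν) dμ(x) ≤ ∫ KL(κ(x) ‖ q) dμ(x)` where `ν = μ.bind κ` is the
output measure; the left-hand side is the mutual information of the channel `κ` with
input distribution `μ`. -/
theorem mutualInfo_le_integral_klDiv {X Y : Type*} [MeasurableSpace X] [StandardBorelSpace X]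
    [MeasurableSpace Y] [StandardBorelSpace Y]
    (μ : Measure X) [IsProbabilityMeasure μ]
    (κ : Kernel X Y) [IsMarkovKernel κ]
    (ν : Measure Y) (hν : ν = μ.bind (fun x => κ x))
    (q : Measure Y) [IsProbabilityMeasure q] :
    ∫⁻ x, klDiv (κ x) ν ∂μ ≤ ∫⁻ x, klDiv (κ x) q ∂μ := by
  change ν = κ ∘ₘ μ at hν
  subst hν
  have h_eq (ρ : Measure Y) [IsProbabilityMeasure ρ] (x : X) :
      klDiv (κ x) ρ = InformationTheory.klDiv (κ x) ρ :=
    klDiv_eq_informationTheory_klDiv (by simp)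
  simp_rw [h_eq, InformationTheory.lintegral_klDiv_eq_lintegral_klDiv_comp_add μ κ q]
  exact le_self_add
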